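/- arXiv:2603.15148 — 9 statements merged into one kernel-verified Lean document; each statement's English description precedes it below -/
import Mathlib

section
/- Let F be a finite field with |F| = q and char(F) ∉ {2,3}. The algebras A1(α1,α2,α4,β1) = (α1, α2, 1+α2, α4; β1, −α1, 1−α1, −α2), for (α1,α2,α4,β1) ∈ F^4, are pairwise non-isomorphic for distinct parameter quadruples; in particular, the number of isomorphism classes among them equals q^4. -/
/-- The bilinear multiplication on `F²` determined by a 2×4 matrix of structure
constants `M = (α₁ α₂ α₃ α₄; β₁ β₂ β₃ β₄)`, i.e. `e₁e₁ = α₁e₁+β₁e₂`,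
`e₁e₂ = α₂e₁+β₂e₂`, `e₂e₁ = α₃e₁+β₃e₂`, `e₂e₂ = α₄e₁+β₄e₂`. -/
def scMul (F : Type*) [Field F] (M : Matrix (Fin 2) (Fin 4) F)
    (x y : Fin 2 → F) : Fin 2 → F :=
  fun i => x 0 * y 0 * M i 0 + x 0 * y 1 * M i 1 + x 1 * y 0 * M i 2 + x 1 * y 1 * M i 3

/-- Two algebras given by matrices of structure constants are isomorphic iff there is
an `F`-linear bijection `g` with `g (x·y) = g x · g y`. -/
def scIso (F : Type*) [Field F] (M N : Matrix (Fin 2) (Fin 4) F) : Prop :=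
  ∃ g : (Fin 2 → F) ≃ₗ[F] (Fin 2 → F), ∀ x y, g (scMul F M x y) = scMul F N (g x) (g y)

/-- The matrix of structure constants of the algebra `A₁(α₁,α₂,α₄,β₁)`. -/
def A1mat (F : Type*) [Field F] (c : F × F × F × F) : Matrix (Fin 2) (Fin 4) F :=
  !![c.1, c.2.1, 1 + c.2.1, c.2.2.1; c.2.2.2, -c.1, 1 - c.1, -c.2.1]

/-!
Every algebra of the family has the same trace forms: left multiplication by `x` has trace
`x 1` and right multiplication by `x` has trace `x 0`. An isomorphism `g` conjugates left
(right) multiplication by `x` into left (right) multiplication by `g x`, so it preserves both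
traces and hence both coordinates; thus `g` is the identity, and the two algebras have the
same structure constants.
-/

namespace Nat

theorem card_quot_of_rel_imp_eq {α : Type*} {r : α → α → Prop} (h : ∀ a b, r a b → a = b) :
    Nat.card (Quot r) = Nat.card α :=
  Nat.card_congr
    { toFun := Quot.lift id h
      invFun := Quot.mk r
      left_inv := fun x => by induction x using Quot.ind; rfl
      right_inv := fun _ => rfl }

end Nat

section StructureConstants

variable {F : Type*} [Field F]

def scMulBilin (M : Matrix (Fin 2) (Fin 4) F) :
    (Fin 2 → F) →ₗ[F] (Fin 2 → F) →ₗ[F] (Fin 2 → F) :=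
  LinearMap.mk₂ F (scMul F M)
    (fun _ _ _ => by funext i; simp only [scMul, Pi.add_apply]; ring)
    (fun _ _ _ => by funext i; simp only [scMul, Pi.smul_apply, smul_eq_mul]; ring)
    (fun _ _ _ => by funext i; simp only [scMul, Pi.add_apply]; ring)
    (fun _ _ _ => by funext i; simp only [scMul, Pi.smul_apply, smul_eq_mul]; ring)

@[simp]
theorem scMulBilin_apply (M : Matrix (Fin 2) (Fin 4) F) (x y : Fin 2 → F) :
    scMulBilin M x y = scMul F M x y :=
  rfl

theorem scMul_injective : Function.Injective (scMul F) := by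
  intro M N h
  have entry (x y : Fin 2 → F) (i : Fin 2) := congrFun (congrFun (congrFun h x) y) i
  ext i j
  fin_cases j
  · simpa [scMul] using entry (Pi.single 0 1) (Pi.single 0 1) i
  · simpa [scMul] using entry (Pi.single 0 1) (Pi.single 1 1) i
  · simpa [scMul] using entry (Pi.single 1 1) (Pi.single 0 1) i
  · simpa [scMul] using entry (Pi.single 1 1) (Pi.single 1 1) i

theorem trace_scMulBilin (M : Matrix (Fin 2) (Fin 4) F) (x : Fin 2 → F) :
    LinearMap.trace F _ (scMulBilin M x) = x 0 * (M 0 0 + M 1 1) + x 1 * (M 0 2 + M 1 3) := by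
  rw [LinearMap.trace_eq_matrix_trace F (Pi.basisFun F (Fin 2))]
  simp [Matrix.trace, scMul, Fin.sum_univ_two]
  ring

theorem trace_scMulBilin_flip (M : Matrix (Fin 2) (Fin 4) F) (y : Fin 2 → F) :
    LinearMap.trace F _ ((scMulBilin M).flip y) =
      y 0 * (M 0 0 + M 1 2) + y 1 * (M 0 1 + M 1 3) := by
  rw [LinearMap.trace_eq_matrix_trace F (Pi.basisFun F (Fin 2))]
  simp [Matrix.trace, scMul, Fin.sum_univ_two]
  ring

variable {M N : Matrix (Fin 2) (Fin 4) F} {g : (Fin 2 → F) ≃ₗ[F] (Fin 2 → F)}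

theorem conj_scMulBilin (hg : ∀ x y, g (scMul F M x y) = scMul F N (g x) (g y))
    (x : Fin 2 → F) : g.conj (scMulBilin M x) = scMulBilin N (g x) := by
  refine LinearMap.ext fun y => ?_
  simp [LinearEquiv.conj_apply, hg]

theorem conj_scMulBilin_flip (hg : ∀ x y, g (scMul F M x y) = scMul F N (g x) (g y))
    (y : Fin 2 → F) : g.conj ((scMulBilin M).flip y) = (scMulBilin N).flip (g y) := by
  refine LinearMap.ext fun x => ?_
  simp [LinearEquiv.conj_apply, hg]

end StructureConstants

section A1

variable {F : Type*} [Field F]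

theorem A1mat_injective : Function.Injective (A1mat F) := by
  rintro ⟨a₁, a₂, a₄, b₁⟩ ⟨a₁', a₂', a₄', b₁'⟩ h
  have entry (i : Fin 2) (j : Fin 4) := congrFun (congrFun h i) j
  have h₁ := entry 0 0
  have h₂ := entry 0 1
  have h₄ := entry 0 3
  have h₅ := entry 1 0
  simp_all [A1mat]

theorem trace_scMulBilin_A1mat (c : F × F × F × F) (x : Fin 2 → F) :
    LinearMap.trace F _ (scMulBilin (A1mat F c) x) = x 1 := by
  rw [trace_scMulBilin]
  simp [A1mat]

theorem trace_scMulBilin_flip_A1mat (c : F × F × F × F) (y : Fin 2 → F) :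
    LinearMap.trace F _ ((scMulBilin (A1mat F c)).flip y) = y 0 := by
  rw [trace_scMulBilin_flip]
  simp [A1mat]

theorem eq_refl_of_map_mul_A1mat {c c' : F × F × F × F} {g : (Fin 2 → F) ≃ₗ[F] (Fin 2 → F)}
    (hg : ∀ x y, g (scMul F (A1mat F c) x y) = scMul F (A1mat F c') (g x) (g y)) :
    g = LinearEquiv.refl F _ := by
  ext x i
  fin_cases i
  · simpa [trace_scMulBilin_flip_A1mat, LinearMap.trace_conj'] using
      congrArg (LinearMap.trace F _) (conj_scMulBilin_flip hg x).symm
  · simpa [trace_scMulBilin_A1mat, LinearMap.trace_conj'] using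
      congrArg (LinearMap.trace F _) (conj_scMulBilin hg x).symm

theorem eq_of_scIso_A1mat {c c' : F × F × F × F} (h : scIso F (A1mat F c) (A1mat F c')) :
    c = c' := by
  obtain ⟨g, hg⟩ := h
  obtain rfl := eq_refl_of_map_mul_A1mat hg
  exact A1mat_injective (scMul_injective (funext₂ hg))

end A1

theorem count_A1_family_general (F : Type*) [Field F] [Fintype F]
    (q : ℕ) (hq : q = Fintype.card F) :
    (∀ c c' : F × F × F × F, scIso F (A1mat F c) (A1mat F c') → c = c') ∧
    Nat.card (Quot (fun c c' : F × F × F × F => scIso F (A1mat F c) (A1mat F c'))) =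
      q ^ 4 := by
  have h_eq (c c' : F × F × F × F) : scIso F (A1mat F c) (A1mat F c') → c = c' :=
    eq_of_scIso_A1mat
  refine ⟨h_eq, ?_⟩
  rw [Nat.card_quot_of_rel_imp_eq h_eq, Nat.card_eq_fintype_card]
  simp only [Fintype.card_prod, hq]
  ring

/-- The algebras in the family `A₁` are pairwise non-isomorphic for distinct
parameters; in particular the number of isomorphism classes among them is `q⁴`. -/
theorem count_A1_family (F : Type*) [Field F] [Fintype F]
    (h2 : ringChar F ≠ 2) (h3 : ringChar F ≠ 3)
    (q : ℕ) (hq : q = Fintype.card F) :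
    (∀ c c' : F × F × F × F, scIso F (A1mat F c) (A1mat F c') → c = c') ∧
    Nat.card (Quot (fun c c' : F × F × F × F => scIso F (A1mat F c) (A1mat F c'))) =
      q ^ 4 :=
  count_A1_family_general F q hq
end

section
/- Let F be a finite field with |F| = q and char(F) ∉ {2,3}. The number of isomorphism classes among the algebras A3(α1,α4,β2) = (α1, 0, 0, α4; 0, β2, 1−α1, 0), for (α1,α4,β2) ∈ F^3, equals 3q^2. -/
/-- The matrix of structure constants of the algebra `A₃(α₁,α₄,β₂)`. -/
def A3mat (F : Type*) [Field F] (c : F × F × F) : Matrix (Fin 2) (Fin 4) F :=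
  !![c.1, 0, 0, c.2.1; 0, c.2.2, 1 - c.1, 0]

section Field

variable {F : Type*} [Field F]

def scMulRight (M : Matrix (Fin 2) (Fin 4) F) (y : Fin 2 → F) :
    (Fin 2 → F) →ₗ[F] (Fin 2 → F) where
  toFun x := scMul F M x y
  map_add' x x' := by funext i; simp only [scMul, Pi.add_apply]; ring
  map_smul' r x := by
    funext i; simp only [scMul, Pi.smul_apply, smul_eq_mul, RingHom.id_apply]; ring

lemma trace_scMulRight (M : Matrix (Fin 2) (Fin 4) F) (y : Fin 2 → F) :
    LinearMap.trace F _ (scMulRight M y) = y 0 * (M 0 0 + M 1 2) + y 1 * (M 0 1 + M 1 3) := by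
  rw [LinearMap.trace_eq_matrix_trace F (Pi.basisFun F (Fin 2))]
  simp [Matrix.trace, scMulRight, scMul]
  ring

lemma conj_scMulRight {M N : Matrix (Fin 2) (Fin 4) F} {g : (Fin 2 → F) ≃ₗ[F] (Fin 2 → F)}
    (hg : ∀ x y, g (scMul F M x y) = scMul F N (g x) (g y)) (y : Fin 2 → F) :
    g.conj (scMulRight M y) = scMulRight N (g y) := by
  refine LinearMap.ext fun x => ?_
  simp [LinearEquiv.conj_apply, scMulRight, hg]

lemma scMul_A3mat (c : F × F × F) (x y : Fin 2 → F) :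
    scMul F (A3mat F c) x y =
      ![c.1 * x 0 * y 0 + c.2.1 * x 1 * y 1, c.2.2 * x 0 * y 1 + (1 - c.1) * x 1 * y 0] := by
  ext i; fin_cases i <;> simp [scMul, A3mat] <;> ring

lemma A3mat_iso_apply_zero {c c' : F × F × F} {g : (Fin 2 → F) ≃ₗ[F] (Fin 2 → F)}
    (hg : ∀ x y, g (scMul F (A3mat F c) x y) = scMul F (A3mat F c') (g x) (g y))
    (y : Fin 2 → F) : g y 0 = y 0 := by
  have := congrArg (LinearMap.trace F _) (conj_scMulRight hg y)
  simpa [trace_scMulRight, A3mat] using this.symm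

lemma scIso_A3mat_of_sq_mul {c c' : F × F × F} (h1 : c.1 = c'.1) (h2 : c.2.2 = c'.2.2)
    {d : F} (hd : d ≠ 0) (h4 : c.2.1 = d ^ 2 * c'.2.1) : scIso F (A3mat F c) (A3mat F c') := by
  refine ⟨LinearEquiv.piCongrRight ![LinearEquiv.refl F F, LinearEquiv.smulOfNeZero F F d hd], ?_⟩
  intro x y
  ext i; fin_cases i <;> simp [scMul_A3mat, h1, h2, h4] <;> ring

lemma A3mat_params_of_scIso {c c' : F × F × F} (h : scIso F (A3mat F c) (A3mat F c')) :
    c.1 = c'.1 ∧ c.2.2 = c'.2.2 ∧ ∃ d : F, d ≠ 0 ∧ c.2.1 = d ^ 2 * c'.2.1 := by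
  obtain ⟨g, hg⟩ := h
  have hfix := A3mat_iso_apply_zero hg
  set e₁ : Fin 2 → F := Pi.single 0 1
  set e₂ : Fin 2 → F := Pi.single 1 1
  set d := g e₂ 1
  have hge₂ : g e₂ = ![0, d] := by ext i; fin_cases i <;> simp [hfix, e₂, d]
  have hd : d ≠ 0 := by
    intro hd0
    have : g e₂ = 0 := by rw [hge₂, hd0]; ext i; fin_cases i <;> rfl
    simp [e₂] at this
  have hge₂_smul (t : F) : g ![0, t] = t • ![0, d] := by
    rw [← hge₂, ← map_smul]; congr; ext i; fin_cases i <;> simp [e₂]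
  have h₁ : c.1 = c'.1 := by
    simpa [scMul_A3mat, hfix, hge₂, hge₂_smul, e₁, e₂, hd] using congrFun (hg e₂ e₁) 1
  have h₂ : c.2.2 = c'.2.2 := by
    simpa [scMul_A3mat, hfix, hge₂, hge₂_smul, e₁, e₂, hd] using congrFun (hg e₁ e₂) 1
  have h₄ : c.2.1 = c'.2.1 * d * d := by
    simpa [scMul_A3mat, hfix, hge₂, e₂] using congrFun (hg e₂ e₂) 0
  exact ⟨h₁, h₂, d, hd, by rw [h₄]; ring⟩

lemma scIso_A3mat_iff {c c' : F × F × F} :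
    scIso F (A3mat F c) (A3mat F c') ↔
      c.1 = c'.1 ∧ c.2.2 = c'.2.2 ∧ ∃ d : F, d ≠ 0 ∧ c.2.1 = d ^ 2 * c'.2.1 :=
  ⟨A3mat_params_of_scIso, fun ⟨h₁, h₂, _, hd, h₄⟩ => scIso_A3mat_of_sq_mul h₁ h₂ hd h₄⟩

end Field

section FiniteField

variable {F : Type*} [Field F] [Fintype F] [DecidableEq F]

lemma exists_sq_mul_eq_iff_quadraticChar_eq {x y : F} :
    (∃ d : F, d ≠ 0 ∧ x = d ^ 2 * y) ↔ quadraticChar F x = quadraticChar F y := by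
  constructor
  · rintro ⟨d, hd, rfl⟩
    rw [map_mul, quadraticChar_sq_one' hd, one_mul]
  · intro h
    by_cases hy : y = 0
    · have hx : x = 0 := quadraticChar_eq_zero_iff.mp (by simp [h, hy])
      exact ⟨1, one_ne_zero, by simp [hx, hy]⟩
    have hx : x ≠ 0 := fun hx => hy (quadraticChar_eq_zero_iff.mp (by simp [← h, hx]))
    obtain ⟨s, hs⟩ : IsSquare (x * y) := by
      rw [← quadraticChar_one_iff_isSquare (mul_ne_zero hx hy), map_mul, h, ← sq,
        quadraticChar_sq_one hy]
    have hs0 : s ≠ 0 := by rintro rfl; simp [hx, hy] at hs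
    refine ⟨s / y, div_ne_zero hs0 hy, ?_⟩
    field_simp
    linear_combination hs

lemma card_range_quadraticChar (hF : ringChar F ≠ 2) :
    Nat.card (Set.range (quadraticChar F)) = 3 := by
  obtain ⟨n, hn⟩ := FiniteField.exists_nonsquare hF
  have : Set.range (quadraticChar F) = {0, 1, -1} := by
    ext a
    constructor
    · rintro ⟨x, rfl⟩
      by_cases hx : x = 0
      · simp [hx]
      · rcases quadraticChar_dichotomy hx with h | h <;> simp [h]
    · rintro (rfl | rfl | rfl)
      · exact ⟨0, quadraticChar_zero⟩
      · exact ⟨1, map_one _⟩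
      · exact ⟨n, quadraticChar_neg_one_iff_not_isSquare.mpr hn⟩
  rw [this, Nat.card_coe_set_eq, Set.ncard_eq_toFinset_card']
  rfl

end FiniteField

theorem count_A3_family_general (F : Type*) [Field F] [Fintype F]
    (h2 : ringChar F ≠ 2)
    (q : ℕ) (hq : q = Fintype.card F) :
    Nat.card (Quot (fun c c' : F × F × F => scIso F (A3mat F c) (A3mat F c'))) =
      3 * q ^ 2 := by
  classical
  let invariants : F × F × F → F × F × Set.range (quadraticChar F) :=
    fun c => (c.1, c.2.2, Set.rangeFactorization (quadraticChar F) c.2.1)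
  have hsurj : Function.Surjective invariants := by
    rintro ⟨a, b, z⟩
    obtain ⟨x, rfl⟩ := Set.rangeFactorization_surjective z
    exact ⟨(a, x, b), rfl⟩
  have hker (c c' : F × F × F) :
      scIso F (A3mat F c) (A3mat F c') ↔ Setoid.ker invariants c c' := by
    simp [Setoid.ker_def, invariants, scIso_A3mat_iff, exists_sq_mul_eq_iff_quadraticChar_eq,
      Set.rangeFactorization]
  rw [Nat.card_congr ((Quot.congrRight hker).trans
      (Setoid.quotientKerEquivOfSurjective invariants hsurj)), Nat.card_prod, Nat.card_prod,
    card_range_quadraticChar h2, Nat.card_eq_fintype_card, ← hq]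
  ring

/-- The number of isomorphism classes in the family `A₃` is `3q²`. -/
theorem count_A3_family (F : Type*) [Field F] [Fintype F]
    (h2 : ringChar F ≠ 2) (h3 : ringChar F ≠ 3)
    (q : ℕ) (hq : q = Fintype.card F) :
    Nat.card (Quot (fun c c' : F × F × F => scIso F (A3mat F c) (A3mat F c'))) =
      3 * q ^ 2 :=
  count_A3_family_general F h2 q hq
end

section
/- Let F be a field with char(F) ∉ {2,3} and let β1 ∈ F. Then the algebra A10(β1) with matrix of structure constants (0, 1, 1, 1; β1, 0, 0, −1) is isomorphic to the algebra A10(4−β1) with matrix of structure constants (0, 1, 1, 1; 4−β1, 0, 0, −1). -/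
/-- In the basis `e₁ - 2e₂, -e₂` the algebra `A₁₀(β₁)` has the structure constants of
`A₁₀(4 - β₁)`. -/
def a10Shear (F : Type*) [Field F] : (Fin 2 → F) →ₗ[F] (Fin 2 → F) :=
  Matrix.toLin' !![1, 0; -2, -1]

section

variable {F : Type*} [Field F]

theorem a10Shear_apply (x : Fin 2 → F) : a10Shear F x = ![x 0, -2 * x 0 - x 1] := by
  ext i
  fin_cases i <;> simp [a10Shear, Matrix.mulVec, dotProduct, Fin.sum_univ_two, sub_eq_add_neg]

theorem a10Shear_involutive : Function.Involutive (a10Shear F) := by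
  intro x; ext i; fin_cases i <;> simp [a10Shear_apply]

theorem a10Shear_scMul (b : F) (x y : Fin 2 → F) :
    a10Shear F (scMul F !![0, 1, 1, 1; b, 0, 0, -1] x y) =
      scMul F !![0, 1, 1, 1; 4 - b, 0, 0, -1] (a10Shear F x) (a10Shear F y) := by
  ext i; fin_cases i <;> simp [a10Shear_apply, scMul] <;> ring

end

theorem A10_iso_four_sub_general (F : Type*) [Field F] (b : F) :
    scIso F !![0, 1, 1, 1; b, 0, 0, -1] !![0, 1, 1, 1; 4 - b, 0, 0, -1] :=
  ⟨.ofInvolutive (a10Shear F) a10Shear_involutive, a10Shear_scMul b⟩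

/-- `A₁₀(β₁) ≃ A₁₀(4 - β₁)` over a field of characteristic ≠ 2, 3. -/
theorem A10_iso_four_sub (F : Type*) [Field F]
    (h2 : ringChar F ≠ 2) (h3 : ringChar F ≠ 3) (b : F) :
    scIso F !![0, 1, 1, 1; b, 0, 0, -1] !![0, 1, 1, 1; 4 - b, 0, 0, -1] :=
  A10_iso_four_sub_general F b
end

section
/- Let F be a field with char(F) ∉ {2,3}, let β1 ∈ F, and let a ∈ F with a ≠ 0. Then the algebra A11(β1) with matrix of structure constants (0, 0, 0, 1; β1, 0, 0, 0) is isomorphic to the algebra A11(a^3·β1) with matrix of structure constants (0, 0, 0, 1; a^3·β1, 0, 0, 0). -/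
section DiagonalRescaling

variable {F : Type*} [Field F]

/-- The structure constants of `M` in the basis `(d i)⁻¹ eᵢ`; column `j` of `M` holds `e_p e_q`
for `(p, q) = (0,0), (0,1), (1,0), (1,1)`. -/
def diagRescale (d : Fin 2 → F) (M : Matrix (Fin 2) (Fin 4) F) : Matrix (Fin 2) (Fin 4) F :=
  Matrix.of fun i j => d i * M i j / ![d 0 * d 0, d 0 * d 1, d 1 * d 0, d 1 * d 1] j

theorem scIso_diagRescale (M : Matrix (Fin 2) (Fin 4) F) (d : Fin 2 → F) (hd : ∀ i, d i ≠ 0) :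
    scIso F M (diagRescale d M) := by
  refine ⟨LinearEquiv.piCongrRight fun i => LinearEquiv.smulOfNeZero F F (d i) (hd i),
    fun x y => funext fun i => ?_⟩
  have := hd 0; have := hd 1
  fin_cases i <;>
    simp [scMul, diagRescale, LinearEquiv.smulOfNeZero_apply] <;> field_simp

end DiagonalRescaling

theorem A11_iso_cube_scale_general (F : Type*) [Field F] (b a : F) (ha : a ≠ 0) :
    scIso F !![0, 0, 0, 1; b, 0, 0, 0] !![0, 0, 0, 1; a ^ 3 * b, 0, 0, 0] := by
  -- `d = (s, t)` must satisfy `s = t²` (from `e₂e₂ = e₁`) and `t = a³s²` (from `e₁e₁ = b e₂`).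
  have hd : ∀ i, ![a⁻¹ ^ 2, a⁻¹] i ≠ 0 := by
    intro i; fin_cases i <;> simp [ha]
  convert scIso_diagRescale _ _ hd using 1
  ext i j
  fin_cases i <;> fin_cases j <;> simp [diagRescale] <;> field_simp

/-- `A₁₁(β₁) ≃ A₁₁(a³β₁)` over a field of characteristic ≠ 2, 3, for `a ≠ 0`. -/
theorem A11_iso_cube_scale (F : Type*) [Field F]
    (h2 : ringChar F ≠ 2) (h3 : ringChar F ≠ 3) (b a : F) (ha : a ≠ 0) :
    scIso F !![0, 0, 0, 1; b, 0, 0, 0] !![0, 0, 0, 1; a ^ 3 * b, 0, 0, 0] :=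
  A11_iso_cube_scale_general F b a ha
end

section
/- Let F be a field with char(F) ∉ {2,3}, let β1 ∈ F, and let a ∈ F with a ≠ 0. Then the algebra A12(β1) with matrix of structure constants (0, 1, 1, 0; β1, 0, 0, −1) is isomorphic to the algebra A12(a^2·β1) with matrix of structure constants (0, 1, 1, 0; a^2·β1, 0, 0, −1). -/
def diagEquiv (F : Type*) [Field F] (d : Fin 2 → Fˣ) : (Fin 2 → F) ≃ₗ[F] (Fin 2 → F) :=
  LinearEquiv.piCongrRight fun i => LinearEquiv.smulOfUnit (d i)

@[simp]
theorem diagEquiv_apply {F : Type*} [Field F] (d : Fin 2 → Fˣ) (x : Fin 2 → F) (i : Fin 2) :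
    diagEquiv F d x i = d i * x i :=
  rfl

/-- The hypothesis reads `d_k M_k(pq) = d_p d_q N_k(pq)`, the column `pq` running over
`11, 12, 21, 22`: the basis `dᵢeᵢ` of `N` has the structure constants `M`. -/
theorem scIso_of_diag_rescale {F : Type*} [Field F] {M N : Matrix (Fin 2) (Fin 4) F}
    (d : Fin 2 → Fˣ)
    (h : ∀ k, (d k : F) • M k = ![(d 0 : F) * d 0, d 0 * d 1, d 1 * d 0, d 1 * d 1] * N k) :
    scIso F M N := by
  refine ⟨diagEquiv F d, fun x y => funext fun k => ?_⟩
  have hk := congrFun (h k)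
  have h00 := hk 0
  have h01 := hk 1
  have h10 := hk 2
  have h11 := hk 3
  simp at h00 h01 h10 h11
  simp only [scMul, diagEquiv_apply]
  linear_combination x 0 * y 0 * h00 + x 0 * y 1 * h01 + x 1 * y 0 * h10 + x 1 * y 1 * h11

theorem A12_iso_square_scale_general (F : Type*) [Field F]
    (b a : F) (ha : a ≠ 0) :
    scIso F !![0, 1, 1, 0; b, 0, 0, -1] !![0, 1, 1, 0; a ^ 2 * b, 0, 0, -1] := by
  -- In the basis `a⁻¹e₁, e₂` of `A₁₂(a²β₁)` the only changed product is `(a⁻¹e₁)² = β₁e₂`.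
  refine scIso_of_diag_rescale ![(Units.mk0 a ha)⁻¹, 1] fun k => ?_
  fin_cases k <;> ext p <;> fin_cases p <;> simp
  field_simp

/-- `A₁₂(β₁) ≃ A₁₂(a²β₁)` over a field of characteristic ≠ 2, 3, for `a ≠ 0`. -/
theorem A12_iso_square_scale (F : Type*) [Field F]
    (h2 : ringChar F ≠ 2) (h3 : ringChar F ≠ 3) (b a : F) (ha : a ≠ 0) :
    scIso F !![0, 1, 1, 0; b, 0, 0, -1] !![0, 1, 1, 0; a ^ 2 * b, 0, 0, -1] :=
  A12_iso_square_scale_general F b a ha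
end

section
/- Let F be a field with char(F) ∉ {2,3}. Then: (i) the algebra with matrix of structure constants (1, 0, 0, 0; 0, −1, −1, 0) is isomorphic to the algebra A12(0) with matrix of structure constants (0, 1, 1, 0; 0, 0, 0, −1); and (ii) the algebra with matrix of structure constants (0, 0, 0, 0; 1, 0, 0, 0) is isomorphic to the algebra A11(0) with matrix of structure constants (0, 0, 0, 1; 0, 0, 0, 0). -/
/-! Both isomorphisms are explicit changes of basis: `e₁ ↦ -e₂, e₂ ↦ e₁` carries
`(1,0,0,0; 0,-1,-1,0)` onto `A₁₂(0)`, and the swap `e₁ ↔ e₂` carries `(0,0,0,0; 1,0,0,0)`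
onto `A₁₁(0)`. -/

open Matrix

theorem scIso_of_mulVec {F : Type*} [Field F] {M N : Matrix (Fin 2) (Fin 4) F}
    (P Q : Matrix (Fin 2) (Fin 2) F) (hPQ : P * Q = 1)
    (h : ∀ x y, P *ᵥ scMul F M x y = scMul F N (P *ᵥ x) (P *ᵥ y)) : scIso F M N :=
  ⟨P.toLinearEquiv' (invertibleOfRightInverse P Q hPQ), h⟩

theorem scIso_A12_zero (F : Type*) [Field F] :
    scIso F !![1, 0, 0, 0; 0, -1, -1, 0] !![0, 1, 1, 0; 0, 0, 0, -1] := by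
  refine scIso_of_mulVec !![0, 1; -1, 0] !![0, -1; 1, 0] (by simp [one_fin_two]) fun x y => ?_
  ext i
  fin_cases i <;> simp [scMul, mulVec, dotProduct, Fin.sum_univ_two]; ring

theorem scIso_A11_zero (F : Type*) [Field F] :
    scIso F !![0, 0, 0, 0; 1, 0, 0, 0] !![0, 0, 0, 1; 0, 0, 0, 0] := by
  refine scIso_of_mulVec !![0, 1; 1, 0] !![0, 1; 1, 0] (by simp [one_fin_two]) fun x y => ?_
  ext i
  fin_cases i <;> simp [scMul, mulVec, dotProduct, Fin.sum_univ_two]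

theorem special_iso_A12_zero_and_A11_zero_general (F : Type*) [Field F] :
    scIso F !![1, 0, 0, 0; 0, -1, -1, 0] !![0, 1, 1, 0; 0, 0, 0, -1] ∧
    scIso F !![0, 0, 0, 0; 1, 0, 0, 0] !![0, 0, 0, 1; 0, 0, 0, 0] :=
  ⟨scIso_A12_zero F, scIso_A11_zero F⟩

/-- Over a field of characteristic ≠ 2, 3: `(1,0,0,0; 0,-1,-1,0) ≃ A₁₂(0)` and
`(0,0,0,0; 1,0,0,0) ≃ A₁₁(0)`. -/
theorem special_iso_A12_zero_and_A11_zero (F : Type*) [Field F]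
    (h2 : ringChar F ≠ 2) (h3 : ringChar F ≠ 3) :
    scIso F !![1, 0, 0, 0; 0, -1, -1, 0] !![0, 1, 1, 0; 0, 0, 0, -1] ∧
    scIso F !![0, 0, 0, 0; 1, 0, 0, 0] !![0, 0, 0, 1; 0, 0, 0, 0] :=
  special_iso_A12_zero_and_A11_zero_general F
end

section
/- Let F be a field with char(F) = 2, let β1 ∈ F, and let a ∈ F satisfy β1·(β1·a^3+a+1)(β1·a^2+β1·a+1) ≠ 0. Then the algebra A8,2(β1) with matrix of structure constants (0, 1, 1, 1; β1, 0, 0, 1) is isomorphic to the algebra A8,2(β1') with matrix of structure constants (0, 1, 1, 1; β1', 0, 0, 1), where β1' = β1^2·(β1·a^3+a+1)^2 / (β1·a^2+β1·a+1)^3. -/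
/-!
In `A₈,₂(β₁)` over a field of characteristic 2 put `c = β₁a² + β₁a + 1` and `d = β₁(β₁a³ + a + 1)`.
The element `w = a e₁ + e₂` has square `z = e₁ + (1 + a²β₁) e₂`, and `wz = zw = c w`,
`z² = d w + c z`; moreover `w, z` are independent, with determinant `β₁a³ + a + 1`.
Rescaling to `u = (d / c²) w` and `v = z / c` gives `u² = (d² / c³) v`, `uv = vu = u`, `v² = u + v`,
which are the structure constants of `A₈,₂(d² / c³)`.
-/

section StructureConstants

variable {F : Type*} [Field F]

theorem scMul_smul_left (M : Matrix (Fin 2) (Fin 4) F) (c : F) (x y : Fin 2 → F) :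
    scMul F M (c • x) y = c • scMul F M x y := by
  ext i; simp only [scMul, Pi.smul_apply, smul_eq_mul]; ring

theorem scMul_smul_right (M : Matrix (Fin 2) (Fin 4) F) (c : F) (x y : Fin 2 → F) :
    scMul F M x (c • y) = c • scMul F M x y := by
  ext i; simp only [scMul, Pi.smul_apply, smul_eq_mul]; ring

def scMulₗ (M : Matrix (Fin 2) (Fin 4) F) : (Fin 2 → F) →ₗ[F] (Fin 2 → F) →ₗ[F] (Fin 2 → F) :=
  LinearMap.mk₂ F (scMul F M)
    (fun _ _ _ => by ext i; simp only [scMul, Pi.add_apply]; ring) (scMul_smul_left M)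
    (fun _ _ _ => by ext i; simp only [scMul, Pi.add_apply]; ring) (scMul_smul_right M)

theorem scIso_of_forall_basis (M N : Matrix (Fin 2) (Fin 4) F) (g : (Fin 2 → F) ≃ₗ[F] (Fin 2 → F))
    (h : ∀ i j, g (scMul F M (Pi.single i 1) (Pi.single j 1)) =
      scMul F N (g (Pi.single i 1)) (g (Pi.single j 1))) :
    scIso F M N := by
  refine ⟨g, fun x y => ?_⟩
  have hbilin : (scMulₗ M).compr₂ (g : (Fin 2 → F) →ₗ[F] (Fin 2 → F)) =
      (scMulₗ N).compl₁₂ (g : (Fin 2 → F) →ₗ[F] (Fin 2 → F)) g :=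
    LinearMap.ext_basis (Pi.basisFun F (Fin 2)) (Pi.basisFun F (Fin 2)) fun i j => by
      simpa [scMulₗ] using h i j
  simpa [scMulₗ] using LinearMap.congr_fun₂ hbilin x y

theorem scIso.symm {M N : Matrix (Fin 2) (Fin 4) F} (h : scIso F M N) : scIso F N M := by
  obtain ⟨g, hg⟩ := h
  exact ⟨g.symm, fun x y => g.injective (by simp [hg])⟩

end StructureConstants

section A82

variable {F : Type*} [Field F]

theorem scMul_A82_vec2 (b x₀ x₁ y₀ y₁ : F) :
    scMul F !![0, 1, 1, 1; b, 0, 0, 1] ![x₀, x₁] ![y₀, y₁] =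
      ![x₀ * y₁ + x₁ * y₀ + x₁ * y₁, x₀ * y₀ * b + x₁ * y₁] := by
  ext i; fin_cases i <;> simp [scMul, add_assoc]

theorem scIso_A82_of_basis (b b' : F) (u v : Fin 2 → F) (hind : u 0 * v 1 - v 0 * u 1 ≠ 0)
    (huu : scMul F !![0, 1, 1, 1; b, 0, 0, 1] u u = b' • v)
    (huv : scMul F !![0, 1, 1, 1; b, 0, 0, 1] u v = u)
    (hvu : scMul F !![0, 1, 1, 1; b, 0, 0, 1] v u = u)
    (hvv : scMul F !![0, 1, 1, 1; b, 0, 0, 1] v v = u + v) :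
    scIso F !![0, 1, 1, 1; b', 0, 0, 1] !![0, 1, 1, 1; b, 0, 0, 1] := by
  let P : Matrix (Fin 2) (Fin 2) F := !![u 0, v 0; u 1, v 1]
  have hP : IsUnit P.det := by rw [Matrix.det_fin_two_of]; exact hind.isUnit
  let g := P.toLinearEquiv' (P.invertibleOfIsUnitDet hP)
  have hg : ∀ x, g x = x 0 • u + x 1 • v := fun x => by
    change P.mulVec x = _
    ext i; fin_cases i <;> simp [P, Matrix.mulVec, dotProduct, Fin.sum_univ_two, mul_comm (x _)]
  refine scIso_of_forall_basis _ _ g fun i j => ?_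
  fin_cases i <;> fin_cases j <;> simp [hg, scMul, huu, huv, hvu, hvv]

theorem scIso_A82_of_generator (b c d : F) (w z : Fin 2 → F) (hc : c ≠ 0) (hd : d ≠ 0)
    (hind : w 0 * z 1 - z 0 * w 1 ≠ 0)
    (hww : scMul F !![0, 1, 1, 1; b, 0, 0, 1] w w = z)
    (hwz : scMul F !![0, 1, 1, 1; b, 0, 0, 1] w z = c • w)
    (hzw : scMul F !![0, 1, 1, 1; b, 0, 0, 1] z w = c • w)
    (hzz : scMul F !![0, 1, 1, 1; b, 0, 0, 1] z z = d • w + c • z) :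
    scIso F !![0, 1, 1, 1; d ^ 2 / c ^ 3, 0, 0, 1] !![0, 1, 1, 1; b, 0, 0, 1] := by
  refine scIso_A82_of_basis b _ ((d / c ^ 2) • w) (c⁻¹ • z) ?_ ?_ ?_ ?_ ?_
  · have hdet : ((d / c ^ 2) • w) 0 * (c⁻¹ • z) 1 - (c⁻¹ • z) 0 * ((d / c ^ 2) • w) 1 =
        d / c ^ 3 * (w 0 * z 1 - z 0 * w 1) := by
      simp only [Pi.smul_apply, smul_eq_mul]; field_simp
    rw [hdet]
    exact mul_ne_zero (div_ne_zero hd (pow_ne_zero 3 hc)) hind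
  all_goals
    simp only [scMul_smul_left, scMul_smul_right, hww, hwz, hzw, hzz, smul_add, smul_smul]
    match_scalars <;> field_simp

end A82

section CharTwo

variable {F : Type*} [Field F] [CharP F 2] (b a : F)

theorem scMul_A82_generator_self :
    scMul F !![0, 1, 1, 1; b, 0, 0, 1] ![a, 1] ![a, 1] = ![1, 1 + a ^ 2 * b] := by
  rw [scMul_A82_vec2]
  exact Matrix.vec2_eq (by linear_combination a * CharTwo.two_eq_zero (R := F)) (by ring)

theorem scMul_A82_generator_square :
    scMul F !![0, 1, 1, 1; b, 0, 0, 1] ![a, 1] ![1, 1 + a ^ 2 * b] =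
      (b * a ^ 2 + b * a + 1) • ![a, 1] := by
  rw [scMul_A82_vec2, Matrix.smul_vec2]
  exact Matrix.vec2_eq (by linear_combination CharTwo.two_eq_zero (R := F)) (by ring)

theorem scMul_A82_square_generator :
    scMul F !![0, 1, 1, 1; b, 0, 0, 1] ![1, 1 + a ^ 2 * b] ![a, 1] =
      (b * a ^ 2 + b * a + 1) • ![a, 1] := by
  rw [scMul_A82_vec2, Matrix.smul_vec2]
  exact Matrix.vec2_eq (by linear_combination CharTwo.two_eq_zero (R := F)) (by ring)

theorem scMul_A82_square_self :
    scMul F !![0, 1, 1, 1; b, 0, 0, 1] ![1, 1 + a ^ 2 * b] ![1, 1 + a ^ 2 * b] =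
      (b * (b * a ^ 3 + a + 1)) • ![a, 1] + (b * a ^ 2 + b * a + 1) • ![1, 1 + a ^ 2 * b] := by
  rw [scMul_A82_vec2, Matrix.smul_vec2, Matrix.smul_vec2, Matrix.vec2_add]
  exact Matrix.vec2_eq
    (by linear_combination (a ^ 2 * b - a * b + 1) * CharTwo.two_eq_zero (R := F))
    (by linear_combination -(a ^ 3 * b ^ 2 + a * b) * CharTwo.two_eq_zero (R := F))

end CharTwo

/-- `A₈,₂(β₁) ≃ A₈,₂(β₁'(a))` over a field of characteristic 2, where
`β₁'(a) = β₁²(β₁a³+a+1)² / (β₁a²+β₁a+1)³`. -/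
theorem A82_iso_param_change (F : Type*) [Field F]
    (h2 : ringChar F = 2) (b a : F)
    (hpoly : b * ((b * a ^ 3 + a + 1) * (b * a ^ 2 + b * a + 1)) ≠ 0) :
    scIso F !![0, 1, 1, 1; b, 0, 0, 1]
      !![0, 1, 1, 1;
         b ^ 2 * (b * a ^ 3 + a + 1) ^ 2 / (b * a ^ 2 + b * a + 1) ^ 3, 0, 0, 1] := by
  have : CharP F 2 := ringChar.of_eq h2
  obtain ⟨hb, hc1, hc2⟩ : b ≠ 0 ∧ b * a ^ 3 + a + 1 ≠ 0 ∧ b * a ^ 2 + b * a + 1 ≠ 0 := by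
    simpa only [mul_ne_zero_iff] using hpoly
  have hind : a * (1 + a ^ 2 * b) - 1 * 1 ≠ 0 := fun h =>
    hc1 (by linear_combination h + CharTwo.two_eq_zero (R := F))
  rw [← mul_pow]
  exact (scIso_A82_of_generator b _ _ _ _ hc2 (mul_ne_zero hb hc1) hind
    (scMul_A82_generator_self b a) (scMul_A82_generator_square b a)
    (scMul_A82_square_generator b a) (scMul_A82_square_self b a)).symm
end

section
/- Let F be a field with char(F) ∉ {2,3} and let β1 ∈ F. The algebras A10(β1) = (0, 1, 1, 1; β1, 0, 0, −1), A11(β1) = (0, 0, 0, 1; β1, 0, 0, 0) and A12(β1) = (0, 1, 1, 0; β1, 0, 0, −1) are all commutative and satisfy x·(x·x) = (x·x)·x for all x; moreover, writing x = u·e1 + v·e2, one has x·(x·x) = (β1·u^2 + β1·u·v + v^2)·x in A10(β1), x·(x·x) = (β1·u·v)·x in A11(β1), and x·(x·x) = (β1·u^2 + v^2)·x in A12(β1). -/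
section

variable {F : Type*} [Field F]

theorem scMul_comm {M : Matrix (Fin 2) (Fin 4) F} (hM : ∀ i, M i 1 = M i 2)
    (x y : Fin 2 → F) : scMul F M x y = scMul F M y x := by
  funext i
  simp only [scMul, hM]
  ring

theorem scMul_vec (M : Matrix (Fin 2) (Fin 4) F) (u v u' v' : F) :
    scMul F M ![u, v] ![u', v'] =
      ![u * u' * M 0 0 + u * v' * M 0 1 + v * u' * M 0 2 + v * v' * M 0 3,
        u * u' * M 1 0 + u * v' * M 1 1 + v * u' * M 1 2 + v * v' * M 1 3] := by
  funext i
  fin_cases i <;> rfl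

theorem scMul_A10_cube (b u v : F) :
    scMul F !![0, 1, 1, 1; b, 0, 0, -1] ![u, v]
        (scMul F !![0, 1, 1, 1; b, 0, 0, -1] ![u, v] ![u, v]) =
      (b * u ^ 2 + b * u * v + v ^ 2) • ![u, v] := by
  rw [scMul_vec, scMul_vec]
  funext i
  fin_cases i <;>
    simp only [Matrix.of_apply, Matrix.cons_val', Matrix.cons_val, Matrix.cons_val_fin_one,
      Fin.zero_eta, Fin.mk_one, Pi.smul_apply, smul_eq_mul] <;> ring

theorem scMul_A11_cube (b u v : F) :
    scMul F !![0, 0, 0, 1; b, 0, 0, 0] ![u, v]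
        (scMul F !![0, 0, 0, 1; b, 0, 0, 0] ![u, v] ![u, v]) =
      (b * u * v) • ![u, v] := by
  rw [scMul_vec, scMul_vec]
  funext i
  fin_cases i <;>
    simp only [Matrix.of_apply, Matrix.cons_val', Matrix.cons_val, Matrix.cons_val_fin_one,
      Fin.zero_eta, Fin.mk_one, Pi.smul_apply, smul_eq_mul] <;> ring

theorem scMul_A12_cube (b u v : F) :
    scMul F !![0, 1, 1, 0; b, 0, 0, -1] ![u, v]
        (scMul F !![0, 1, 1, 0; b, 0, 0, -1] ![u, v] ![u, v]) =
      (b * u ^ 2 + v ^ 2) • ![u, v] := by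
  rw [scMul_vec, scMul_vec]
  funext i
  fin_cases i <;>
    simp only [Matrix.of_apply, Matrix.cons_val', Matrix.cons_val, Matrix.cons_val_fin_one,
      Fin.zero_eta, Fin.mk_one, Pi.smul_apply, smul_eq_mul] <;> ring

end

theorem A10_A11_A12_third_power_general (F : Type*) [Field F] (b : F) :
    ((∀ x y, scMul F !![0, 1, 1, 1; b, 0, 0, -1] x y =
        scMul F !![0, 1, 1, 1; b, 0, 0, -1] y x) ∧
     (∀ x, scMul F !![0, 1, 1, 1; b, 0, 0, -1] x
          (scMul F !![0, 1, 1, 1; b, 0, 0, -1] x x) =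
        scMul F !![0, 1, 1, 1; b, 0, 0, -1]
          (scMul F !![0, 1, 1, 1; b, 0, 0, -1] x x) x) ∧
     (∀ u v : F, scMul F !![0, 1, 1, 1; b, 0, 0, -1] ![u, v]
          (scMul F !![0, 1, 1, 1; b, 0, 0, -1] ![u, v] ![u, v]) =
        (b * u ^ 2 + b * u * v + v ^ 2) • ![u, v])) ∧
    ((∀ x y, scMul F !![0, 0, 0, 1; b, 0, 0, 0] x y =
        scMul F !![0, 0, 0, 1; b, 0, 0, 0] y x) ∧
     (∀ x, scMul F !![0, 0, 0, 1; b, 0, 0, 0] x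
          (scMul F !![0, 0, 0, 1; b, 0, 0, 0] x x) =
        scMul F !![0, 0, 0, 1; b, 0, 0, 0]
          (scMul F !![0, 0, 0, 1; b, 0, 0, 0] x x) x) ∧
     (∀ u v : F, scMul F !![0, 0, 0, 1; b, 0, 0, 0] ![u, v]
          (scMul F !![0, 0, 0, 1; b, 0, 0, 0] ![u, v] ![u, v]) =
        (b * u * v) • ![u, v])) ∧
    ((∀ x y, scMul F !![0, 1, 1, 0; b, 0, 0, -1] x y =
        scMul F !![0, 1, 1, 0; b, 0, 0, -1] y x) ∧
     (∀ x, scMul F !![0, 1, 1, 0; b, 0, 0, -1] x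
          (scMul F !![0, 1, 1, 0; b, 0, 0, -1] x x) =
        scMul F !![0, 1, 1, 0; b, 0, 0, -1]
          (scMul F !![0, 1, 1, 0; b, 0, 0, -1] x x) x) ∧
     (∀ u v : F, scMul F !![0, 1, 1, 0; b, 0, 0, -1] ![u, v]
          (scMul F !![0, 1, 1, 0; b, 0, 0, -1] ![u, v] ![u, v]) =
        (b * u ^ 2 + v ^ 2) • ![u, v])) := by
  have comm10 := scMul_comm (M := !![0, 1, 1, 1; b, 0, 0, -1]) (fun i => by fin_cases i <;> rfl)
  have comm11 := scMul_comm (M := !![0, 0, 0, 1; b, 0, 0, 0]) (fun i => by fin_cases i <;> rfl)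
  have comm12 := scMul_comm (M := !![0, 1, 1, 0; b, 0, 0, -1]) (fun i => by fin_cases i <;> rfl)
  exact ⟨⟨comm10, fun x => comm10 x _, scMul_A10_cube b⟩,
    ⟨comm11, fun x => comm11 x _, scMul_A11_cube b⟩,
    ⟨comm12, fun x => comm12 x _, scMul_A12_cube b⟩⟩

/-- The algebras `A₁₀(β₁)`, `A₁₁(β₁)`, `A₁₂(β₁)` are commutative, satisfy
`x(xx) = (xx)x`, and for `x = u e₁ + v e₂` one has `x(xx) = (β₁u²+β₁uv+v²)x`,
`x(xx) = (β₁uv)x` and `x(xx) = (β₁u²+v²)x` respectively. -/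
theorem A10_A11_A12_third_power (F : Type*) [Field F]
    (h2 : ringChar F ≠ 2) (h3 : ringChar F ≠ 3) (b : F) :
    ((∀ x y, scMul F !![0, 1, 1, 1; b, 0, 0, -1] x y =
        scMul F !![0, 1, 1, 1; b, 0, 0, -1] y x) ∧
     (∀ x, scMul F !![0, 1, 1, 1; b, 0, 0, -1] x
          (scMul F !![0, 1, 1, 1; b, 0, 0, -1] x x) =
        scMul F !![0, 1, 1, 1; b, 0, 0, -1]
          (scMul F !![0, 1, 1, 1; b, 0, 0, -1] x x) x) ∧
     (∀ u v : F, scMul F !![0, 1, 1, 1; b, 0, 0, -1] ![u, v]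
          (scMul F !![0, 1, 1, 1; b, 0, 0, -1] ![u, v] ![u, v]) =
        (b * u ^ 2 + b * u * v + v ^ 2) • ![u, v])) ∧
    ((∀ x y, scMul F !![0, 0, 0, 1; b, 0, 0, 0] x y =
        scMul F !![0, 0, 0, 1; b, 0, 0, 0] y x) ∧
     (∀ x, scMul F !![0, 0, 0, 1; b, 0, 0, 0] x
          (scMul F !![0, 0, 0, 1; b, 0, 0, 0] x x) =
        scMul F !![0, 0, 0, 1; b, 0, 0, 0]
          (scMul F !![0, 0, 0, 1; b, 0, 0, 0] x x) x) ∧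
     (∀ u v : F, scMul F !![0, 0, 0, 1; b, 0, 0, 0] ![u, v]
          (scMul F !![0, 0, 0, 1; b, 0, 0, 0] ![u, v] ![u, v]) =
        (b * u * v) • ![u, v])) ∧
    ((∀ x y, scMul F !![0, 1, 1, 0; b, 0, 0, -1] x y =
        scMul F !![0, 1, 1, 0; b, 0, 0, -1] y x) ∧
     (∀ x, scMul F !![0, 1, 1, 0; b, 0, 0, -1] x
          (scMul F !![0, 1, 1, 0; b, 0, 0, -1] x x) =
        scMul F !![0, 1, 1, 0; b, 0, 0, -1]
          (scMul F !![0, 1, 1, 0; b, 0, 0, -1] x x) x) ∧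
     (∀ u v : F, scMul F !![0, 1, 1, 0; b, 0, 0, -1] ![u, v]
          (scMul F !![0, 1, 1, 0; b, 0, 0, -1] ![u, v] ![u, v]) =
        (b * u ^ 2 + v ^ 2) • ![u, v])) :=
  A10_A11_A12_third_power_general F b
end

section
/- Let F be a field with char(F) ∉ {2,3}, and let β, β', β'' ∈ F be such that the polynomial (β·t^3−3t−1)(β·t^2+β·t+1)(β^2·t^3+6β·t^2+3β·t+β−2) has no root in F, β' ≠ 0, and the polynomial β'−t^3 has no root in F. Then the three algebras A10(β) = (0, 1, 1, 1; β, 0, 0, −1), A11(β') = (0, 0, 0, 1; β', 0, 0, 0) and A12(β'') = (0, 1, 1, 0; β'', 0, 0, −1) are pairwise non-isomorphic. -/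
/-!
An isomorphism carries nonzero idempotents to nonzero idempotents and zero divisors to zero
divisors. `A₁₂(β'')` has the nonzero idempotent `-e₂` and `A₁₁(β')` has zero divisors,
`e₁e₂ = 0`. An idempotent `(a, b) ≠ 0` of `A₁₀(β)` would make `a / b` a root of `βt³ - 3t - 1`,
and one of `A₁₁(β')` would make `b⁻¹` a cube root of `β'`. A product `ab = 0` in `A₁₀(β)` is a
linear system in `b` with determinant `-(βa₀² + βa₀a₁ + a₁²)`, and this binary form is
anisotropic since `βt² + βt + 1` has no root and `β ≠ 0` (`t = -1/3` is not a root of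
`βt³ - 3t - 1`).
-/

lemma Ring.three_ne_zero {R : Type*} [NonAssocSemiring R] [Nontrivial R]
    (hR : ringChar R ≠ 3) : (3 : R) ≠ 0 := by
  rw [Ne, (by norm_cast : (3 : R) = (3 : ℕ)), ringChar.spec, Nat.dvd_prime Nat.prime_three]
  exact mt (or_iff_left hR).mp CharP.ringChar_ne_one

lemma Fin.two_vec_eq_zero_iff {M : Type*} [Zero M] (x : Fin 2 → M) :
    x = 0 ↔ x 0 = 0 ∧ x 1 = 0 := by
  simp [funext_iff, Fin.forall_fin_two]

def HasNonzeroIdempotent (F : Type*) [Field F] (M : Matrix (Fin 2) (Fin 4) F) : Prop :=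
  ∃ x : Fin 2 → F, x ≠ 0 ∧ scMul F M x x = x

def HasZeroDivisors (F : Type*) [Field F] (M : Matrix (Fin 2) (Fin 4) F) : Prop :=
  ∃ a b : Fin 2 → F, a ≠ 0 ∧ b ≠ 0 ∧ scMul F M a b = 0

section StructureConstants

variable {F : Type*} [Field F]

lemma HasNonzeroIdempotent.of_scIso {M N : Matrix (Fin 2) (Fin 4) F} (h : scIso F M N)
    (hN : HasNonzeroIdempotent F N) : HasNonzeroIdempotent F M := by
  obtain ⟨g, hg⟩ := h
  obtain ⟨x, hx, hxx⟩ := hN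
  refine ⟨g.symm x, g.symm.map_ne_zero_iff.mpr hx, g.injective ?_⟩
  rw [hg, g.apply_symm_apply, hxx]

lemma HasZeroDivisors.of_scIso {M N : Matrix (Fin 2) (Fin 4) F} (h : scIso F M N)
    (hN : HasZeroDivisors F N) : HasZeroDivisors F M := by
  obtain ⟨g, hg⟩ := h
  obtain ⟨a, b, ha, hb, hab⟩ := hN
  refine ⟨g.symm a, g.symm b, g.symm.map_ne_zero_iff.mpr ha, g.symm.map_ne_zero_iff.mpr hb,
    g.injective ?_⟩
  rw [hg, g.apply_symm_apply, g.apply_symm_apply, hab, map_zero]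

lemma scMul_A10 (β : F) (x y : Fin 2 → F) :
    scMul F !![0, 1, 1, 1; β, 0, 0, -1] x y =
      ![x 0 * y 1 + x 1 * y 0 + x 1 * y 1, β * x 0 * y 0 - x 1 * y 1] := by
  ext i
  fin_cases i
  · simp [scMul]
  · simp [scMul]
    ring

lemma scMul_A11 (β' : F) (x y : Fin 2 → F) :
    scMul F !![0, 0, 0, 1; β', 0, 0, 0] x y = ![x 1 * y 1, β' * x 0 * y 0] := by
  ext i
  fin_cases i
  · simp [scMul]
  · simp [scMul]
    ring

lemma scMul_A12 (β'' : F) (x y : Fin 2 → F) :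
    scMul F !![0, 1, 1, 0; β'', 0, 0, -1] x y =
      ![x 0 * y 1 + x 1 * y 0, β'' * x 0 * y 0 - x 1 * y 1] := by
  ext i
  fin_cases i
  · simp [scMul]
  · simp [scMul]
    ring

lemma not_hasNonzeroIdempotent_A10 {β : F} (hβ : ∀ t : F, β * t ^ 3 - 3 * t - 1 ≠ 0) :
    ¬ HasNonzeroIdempotent F !![0, 1, 1, 1; β, 0, 0, -1] := by
  rintro ⟨x, hx, hxx⟩
  rw [scMul_A10] at hxx
  have h0 : x 0 * x 1 + x 1 * x 0 + x 1 * x 1 = x 0 := congrFun hxx 0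
  have h1 : β * x 0 * x 0 - x 1 * x 1 = x 1 := congrFun hxx 1
  have hx1 : x 1 ≠ 0 := by
    intro hx1
    refine hx ((Fin.two_vec_eq_zero_iff x).mpr ⟨?_, hx1⟩)
    linear_combination (2 * x 0 + x 1) * hx1 - h0
  have hcubic : β * x 0 ^ 3 - 3 * x 0 * x 1 ^ 2 - x 1 ^ 3 = 0 := by
    linear_combination x 0 * h1 - x 1 * h0
  apply hβ (x 0 / x 1)
  field_simp
  linear_combination hcubic

lemma not_hasNonzeroIdempotent_A11 {β' : F} (hβ' : ∀ t : F, β' - t ^ 3 ≠ 0) :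
    ¬ HasNonzeroIdempotent F !![0, 0, 0, 1; β', 0, 0, 0] := by
  rintro ⟨x, hx, hxx⟩
  rw [scMul_A11] at hxx
  have h0 : x 1 * x 1 = x 0 := congrFun hxx 0
  have h1 : β' * x 0 * x 0 = x 1 := congrFun hxx 1
  have hx1 : x 1 ≠ 0 := by
    intro hx1
    refine hx ((Fin.two_vec_eq_zero_iff x).mpr ⟨?_, hx1⟩)
    linear_combination x 1 * hx1 - h0
  have hcube : x 1 * (β' * x 1 ^ 3 - 1) = 0 := by
    linear_combination h1 + β' * (x 1 * x 1 + x 0) * h0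
  apply hβ' (x 1)⁻¹
  field_simp
  linear_combination (mul_eq_zero.mp hcube).resolve_left hx1

lemma beta_sq_add_beta_mul_add_sq_ne_zero {β : F} (hβ0 : β ≠ 0)
    (hβ : ∀ t : F, β * t ^ 2 + β * t + 1 ≠ 0) {a : Fin 2 → F} (ha : a ≠ 0) :
    β * a 0 ^ 2 + β * a 0 * a 1 + a 1 ^ 2 ≠ 0 := by
  by_cases ha1 : a 1 = 0
  · have ha0 : a 0 ≠ 0 := fun ha0 => ha ((Fin.two_vec_eq_zero_iff a).mpr ⟨ha0, ha1⟩)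
    simp [ha1, hβ0, ha0]
  · intro hQ
    apply hβ (a 0 / a 1)
    field_simp
    linear_combination hQ

lemma not_hasZeroDivisors_A10 {β : F} (hβ0 : β ≠ 0) (hβ : ∀ t : F, β * t ^ 2 + β * t + 1 ≠ 0) :
    ¬ HasZeroDivisors F !![0, 1, 1, 1; β, 0, 0, -1] := by
  rintro ⟨a, b, ha, hb, hab⟩
  rw [scMul_A10] at hab
  have h0 : a 0 * b 1 + a 1 * b 0 + a 1 * b 1 = 0 := congrFun hab 0
  have h1 : β * a 0 * b 0 - a 1 * b 1 = 0 := congrFun hab 1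
  have hQ := beta_sq_add_beta_mul_add_sq_ne_zero hβ0 hβ ha
  have hb0 : (β * a 0 ^ 2 + β * a 0 * a 1 + a 1 ^ 2) * b 0 = 0 := by
    linear_combination a 1 * h0 + (a 0 + a 1) * h1
  have hb1 : (β * a 0 ^ 2 + β * a 0 * a 1 + a 1 ^ 2) * b 1 = 0 := by
    linear_combination β * a 0 * h0 - a 1 * h1
  exact hb ((Fin.two_vec_eq_zero_iff b).mpr
    ⟨(mul_eq_zero.mp hb0).resolve_left hQ, (mul_eq_zero.mp hb1).resolve_left hQ⟩)

lemma hasZeroDivisors_A11 (β' : F) : HasZeroDivisors F !![0, 0, 0, 1; β', 0, 0, 0] :=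
  ⟨![1, 0], ![0, 1], by simp, by simp, by simp [scMul_A11]⟩

lemma hasNonzeroIdempotent_A12 (β'' : F) :
    HasNonzeroIdempotent F !![0, 1, 1, 0; β'', 0, 0, -1] :=
  ⟨![0, -1], by simp, by simp [scMul_A12]⟩

end StructureConstants

theorem A10_A11_A12_pairwise_nonisomorphic_general (F : Type*) [Field F]
    (h3 : ringChar F ≠ 3) (β β' β'' : F)
    (hβ : ∀ t : F, (β * t ^ 3 - 3 * t - 1) * (β * t ^ 2 + β * t + 1) *
      (β ^ 2 * t ^ 3 + 6 * β * t ^ 2 + 3 * β * t + β - 2) ≠ 0)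
    (hβ' : ∀ t : F, β' - t ^ 3 ≠ 0) :
    ¬ scIso F !![0, 1, 1, 1; β, 0, 0, -1] !![0, 0, 0, 1; β', 0, 0, 0] ∧
    ¬ scIso F !![0, 1, 1, 1; β, 0, 0, -1] !![0, 1, 1, 0; β'', 0, 0, -1] ∧
    ¬ scIso F !![0, 0, 0, 1; β', 0, 0, 0] !![0, 1, 1, 0; β'', 0, 0, -1] := by
  have hcubic (t : F) : β * t ^ 3 - 3 * t - 1 ≠ 0 :=
    left_ne_zero_of_mul (left_ne_zero_of_mul (hβ t))
  have hquadratic (t : F) : β * t ^ 2 + β * t + 1 ≠ 0 :=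
    right_ne_zero_of_mul (left_ne_zero_of_mul (hβ t))
  have hβ0 : β ≠ 0 := by
    rintro rfl
    have h3' := Ring.three_ne_zero h3
    apply hcubic (-3⁻¹)
    field_simp
    ring
  exact ⟨fun h => not_hasZeroDivisors_A10 hβ0 hquadratic (.of_scIso h (hasZeroDivisors_A11 β')),
    fun h => not_hasNonzeroIdempotent_A10 hcubic (.of_scIso h (hasNonzeroIdempotent_A12 β'')),
    fun h => not_hasNonzeroIdempotent_A11 hβ' (.of_scIso h (hasNonzeroIdempotent_A12 β''))⟩

/-- Under the stated root-freeness conditions, `A₁₀(β)`, `A₁₁(β')`, `A₁₂(β'')`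
are pairwise non-isomorphic. -/
theorem A10_A11_A12_pairwise_nonisomorphic (F : Type*) [Field F]
    (h2 : ringChar F ≠ 2) (h3 : ringChar F ≠ 3) (β β' β'' : F)
    (hβ : ∀ t : F, (β * t ^ 3 - 3 * t - 1) * (β * t ^ 2 + β * t + 1) *
      (β ^ 2 * t ^ 3 + 6 * β * t ^ 2 + 3 * β * t + β - 2) ≠ 0)
    (hβ'0 : β' ≠ 0) (hβ' : ∀ t : F, β' - t ^ 3 ≠ 0) :
    ¬ scIso F !![0, 1, 1, 1; β, 0, 0, -1] !![0, 0, 0, 1; β', 0, 0, 0] ∧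
    ¬ scIso F !![0, 1, 1, 1; β, 0, 0, -1] !![0, 1, 1, 0; β'', 0, 0, -1] ∧
    ¬ scIso F !![0, 0, 0, 1; β', 0, 0, 0] !![0, 1, 1, 0; β'', 0, 0, -1] :=
  A10_A11_A12_pairwise_nonisomorphic_general F h3 β β' β'' hβ hβ'
end
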